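/- arXiv:2209.10045 — 7 statements merged into one kernel-verified Lean document; each statement's English description precedes it below -/
import Mathlib

section
/- If (A₀, A₁, A₂) is an extendable collection of cap sets in 𝔽₃ⁿ, and S ⊆ {0,1,2}ᵐ is an admissible set, then S(A₀, A₁, A₂) is a cap set in 𝔽₃^{nm}. -/
/-- A cap set in `𝔽₃ⁿ` (modelled as `Fin n → ZMod 3`): no solutions to `x + y + z = 0`
other than `x = y = z`. -/
def IsCapSet {n : ℕ} (A : Set (Fin n → ZMod 3)) : Prop :=
  ∀ x ∈ A, ∀ y ∈ A, ∀ z ∈ A, x + y + z = 0 → x = y ∧ y = z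

/-- The triple condition: the multiset `{a, b, c}` is `{0,1,2}`, `{0,0,1}` or `{0,0,2}`. -/
def TripleCond (a b c : Fin 3) : Prop :=
  ({a, b, c} : Multiset (Fin 3)) = {0, 1, 2} ∨
  ({a, b, c} : Multiset (Fin 3)) = {0, 0, 1} ∨
  ({a, b, c} : Multiset (Fin 3)) = {0, 0, 2}

/-- An admissible set `S ⊆ {0,1,2}ᵐ`. -/
def IsAdmissible {m : ℕ} (S : Set (Fin m → Fin 3)) : Prop :=
  (∀ s ∈ S, ∀ s' ∈ S, s ≠ s' →
    (∃ i, s i = 0 ∧ s' i ≠ 0) ∧ (∃ j, s j ≠ 0 ∧ s' j = 0)) ∧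
  (∀ s ∈ S, ∀ s' ∈ S, ∀ s'' ∈ S, s ≠ s' → s ≠ s'' → s' ≠ s'' →
    ∃ k, TripleCond (s k) (s' k) (s'' k))

/-- A recursively admissible set `S ⊆ {0,1,2}ᵐ`. -/
def IsRecursivelyAdmissible {m : ℕ} (S : Set (Fin m → Fin 3)) : Prop :=
  IsAdmissible S ∧ 2 ≤ S.ncard ∧
  ∀ s ∈ S, ∀ s' ∈ S, s ≠ s' →
    ((∃ i, ({s i, s' i} : Multiset (Fin 3)) = {0, 1}) ∧
      (∃ j, ({s j, s' j} : Multiset (Fin 3)) = {0, 2})) ∨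
    (∃ k, s k = 0 ∧ s' k = 0)

/-- The weight of a vector in `{0,1,2}ᵐ`: the number of nonzero coordinates. -/
def weight {m : ℕ} (s : Fin m → Fin 3) : ℕ :=
  (Finset.univ.filter fun i => s i ≠ 0).card

/-- A collection `(A₀, A₁, A₂)` of subsets of `𝔽₃ⁿ` is extendable. -/
def IsExtendable {n : ℕ} (A : Fin 3 → Set (Fin n → ZMod 3)) : Prop :=
  (∀ x ∈ A 0, ∀ y ∈ A 0, ∀ z ∈ A 1 ∪ A 2, x + y + z ≠ 0) ∧
  (∀ x ∈ A 0, ∀ y ∈ A 1, ∀ z ∈ A 2, x + y + z ≠ 0)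

/-- The direct (concatenation) product of `A ⊆ 𝔽₃ⁿ` and `B ⊆ 𝔽₃ᵐ`, inside `𝔽₃^{n+m}`. -/
def prodSet {n m : ℕ} (A : Set (Fin n → ZMod 3)) (B : Set (Fin m → ZMod 3)) :
    Set (Fin (n + m) → ZMod 3) :=
  {x | ∃ a ∈ A, ∃ b ∈ B, x = Fin.append a b}

/-- The extended product `S(A₀, A₁, A₂) = ⋃_{s ∈ S} A_{s₁} × ⋯ × A_{s_m} ⊆ 𝔽₃^{mn}`. -/
def extProd {n m : ℕ} (S : Set (Fin m → Fin 3)) (A : Fin 3 → Set (Fin n → ZMod 3)) :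
    Set (Fin (m * n) → ZMod 3) :=
  {x | ∃ s ∈ S, ∀ i : Fin m, (fun j : Fin n => x (finProdFinEquiv (i, j))) ∈ A (s i)}

/-- The `m`-fold direct product `Bᵐ ⊆ 𝔽₃^{mn}` of `B ⊆ 𝔽₃ⁿ`. -/
def powSet {n : ℕ} (m : ℕ) (B : Set (Fin n → ZMod 3)) : Set (Fin (m * n) → ZMod 3) :=
  {x | ∀ i : Fin m, (fun j : Fin n => x (finProdFinEquiv (i, j))) ∈ B}

/-- The direct (concatenation) product of `S ⊆ {0,1,2}ⁿ` and `T ⊆ {0,1,2}ᵐ`. -/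
def appendSet {n m : ℕ} (S : Set (Fin n → Fin 3)) (T : Set (Fin m → Fin 3)) :
    Set (Fin (n + m) → Fin 3) :=
  {x | ∃ s ∈ S, ∃ t ∈ T, x = Fin.append s t}

/-- A collection `(S₀, S₁, S₂)` of subsets of `{0,1,2}ᵐ` is meta-extendable. -/
def IsMetaExtendable {m : ℕ} (S : Fin 3 → Set (Fin m → Fin 3)) : Prop :=
  (∀ s ∈ S 0, ∀ s' ∈ S 1 ∪ S 2, weight s < weight s') ∧
  (∀ x ∈ S 0, ∀ y ∈ S 0, ∀ z ∈ S 1 ∪ S 2, ∃ k, TripleCond (x k) (y k) (z k)) ∧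
  (∀ x ∈ S 0, ∀ y ∈ S 1, ∀ z ∈ S 2, ∃ k, TripleCond (x k) (y k) (z k))

/-- The extended product `T(S₀, S₁, S₂) = ⋃_{t ∈ T} S_{t₁} × ⋯ × S_{t_r} ⊆ {0,1,2}^{rm}`. -/
def metaProd {m r : ℕ} (T : Set (Fin r → Fin 3)) (S : Fin 3 → Set (Fin m → Fin 3)) :
    Set (Fin (r * m) → Fin 3) :=
  {x | ∃ t ∈ T, ∀ i : Fin r, (fun j : Fin m => x (finProdFinEquiv (i, j))) ∈ S (t i)}

lemma tripleCond_iff : ∀ a b c : Fin 3, TripleCond a b c ↔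
    ((a = 0 ∧ b = 1 ∧ c = 2) ∨ (a = 0 ∧ b = 2 ∧ c = 1) ∨ (a = 1 ∧ b = 0 ∧ c = 2) ∨
     (a = 1 ∧ b = 2 ∧ c = 0) ∨ (a = 2 ∧ b = 0 ∧ c = 1) ∨ (a = 2 ∧ b = 1 ∧ c = 0) ∨
     (a = 0 ∧ b = 0 ∧ c = 1) ∨ (a = 0 ∧ b = 1 ∧ c = 0) ∨ (a = 1 ∧ b = 0 ∧ c = 0) ∨
     (a = 0 ∧ b = 0 ∧ c = 2) ∨ (a = 0 ∧ b = 2 ∧ c = 0) ∨ (a = 2 ∧ b = 0 ∧ c = 0)) := by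
  unfold TripleCond; decide

lemma tripleCond_key {n : ℕ} (A : Fin 3 → Set (Fin n → ZMod 3)) (hext : IsExtendable A)
    (a b c : Fin 3) (h : TripleCond a b c) :
    ∀ u ∈ A a, ∀ v ∈ A b, ∀ w ∈ A c, u + v + w ≠ 0 := by
  obtain ⟨h1, h2⟩ := hext
  intro u hu v hv w hw hsum
  rcases (tripleCond_iff a b c).1 h with ⟨rfl, rfl, rfl⟩ | ⟨rfl, rfl, rfl⟩ | ⟨rfl, rfl, rfl⟩ |
    ⟨rfl, rfl, rfl⟩ | ⟨rfl, rfl, rfl⟩ | ⟨rfl, rfl, rfl⟩ | ⟨rfl, rfl, rfl⟩ | ⟨rfl, rfl, rfl⟩ |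
    ⟨rfl, rfl, rfl⟩ | ⟨rfl, rfl, rfl⟩ | ⟨rfl, rfl, rfl⟩ | ⟨rfl, rfl, rfl⟩
  · exact h2 u hu v hv w hw hsum
  · exact h2 u hu w hw v hv (by linear_combination hsum)
  · exact h2 v hv u hu w hw (by linear_combination hsum)
  · exact h2 w hw u hu v hv (by linear_combination hsum)
  · exact h2 v hv w hw u hu (by linear_combination hsum)
  · exact h2 w hw v hv u hu (by linear_combination hsum)
  · exact h1 u hu v hv w (Or.inl hw) hsum
  · exact h1 u hu w hw v (Or.inl hv) (by linear_combination hsum)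
  · exact h1 v hv w hw u (Or.inl hu) (by linear_combination hsum)
  · exact h1 u hu v hv w (Or.inr hw) hsum
  · exact h1 u hu w hw v (Or.inr hv) (by linear_combination hsum)
  · exact h1 v hv w hw u (Or.inr hu) (by linear_combination hsum)

lemma block_ext {n m : ℕ} (u v : Fin (m * n) → ZMod 3)
    (h : ∀ i : Fin m, (fun j : Fin n => u (finProdFinEquiv (i, j)))
        = (fun j : Fin n => v (finProdFinEquiv (i, j)))) : u = v := by
  funext k
  have := congrFun (h (finProdFinEquiv.symm k).1) (finProdFinEquiv.symm k).2
  simpa only [Prod.mk.eta, Equiv.apply_symm_apply] using this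

theorem extProd_isCapSet {n m : ℕ} (A : Fin 3 → Set (Fin n → ZMod 3))
    (hcap : ∀ i, IsCapSet (A i)) (hext : IsExtendable A)
    (S : Set (Fin m → Fin 3)) (hS : IsAdmissible S) :
    IsCapSet (extProd S A) := by
  rintro x ⟨s, hs, hxs⟩ y ⟨s', hs', hys⟩ z ⟨s'', hs'', hzs⟩ hsum
  have hblock : ∀ i : Fin m,
      (fun j : Fin n => x (finProdFinEquiv (i, j))) +
      (fun j : Fin n => y (finProdFinEquiv (i, j))) +
      (fun j : Fin n => z (finProdFinEquiv (i, j))) = 0 := by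
    intro i; funext j; simpa using congrFun hsum (finProdFinEquiv (i, j))
  have hkey := tripleCond_key A hext
  have hfin3 : ∀ v : Fin 3, v ≠ 0 → v = 1 ∨ v = 2 := by decide
  by_cases h12 : s = s'
  · by_cases h13 : s = s''
    · subst h12; subst h13
      exact ⟨block_ext x y fun i =>
          (hcap (s i) _ (hxs i) _ (hys i) _ (hzs i) (hblock i)).1,
        block_ext y z fun i =>
          (hcap (s i) _ (hxs i) _ (hys i) _ (hzs i) (hblock i)).2⟩
    · obtain ⟨i, hsi, hsi''⟩ := (hS.1 s hs s'' hs'' h13).1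
      have tc : TripleCond (s i) (s' i) (s'' i) := by
        rcases hfin3 _ hsi'' with hv | hv <;> rw [← h12, hsi, hv, tripleCond_iff] <;> decide
      exact absurd (hblock i) (hkey _ _ _ tc _ (hxs i) _ (hys i) _ (hzs i))
  · by_cases h13 : s = s''
    · obtain ⟨i, hsi, hsi'⟩ := (hS.1 s hs s' hs' h12).1
      have tc : TripleCond (s i) (s' i) (s'' i) := by
        rcases hfin3 _ hsi' with hv | hv <;> rw [← h13, hsi, hv, tripleCond_iff] <;> decide
      exact absurd (hblock i) (hkey _ _ _ tc _ (hxs i) _ (hys i) _ (hzs i))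
    · by_cases h23 : s' = s''
      · obtain ⟨j, hsj, hs'j⟩ := (hS.1 s hs s' hs' h12).2
        have tc : TripleCond (s j) (s' j) (s'' j) := by
          rcases hfin3 _ hsj with hv | hv <;> rw [← h23, hs'j, hv, tripleCond_iff] <;> decide
        exact absurd (hblock j) (hkey _ _ _ tc _ (hxs j) _ (hys j) _ (hzs j))
      · obtain ⟨k, tc⟩ := hS.2 s hs s' hs' s'' hs'' h12 h13 h23
        exact absurd (hblock k) (hkey _ _ _ tc _ (hxs k) _ (hys k) _ (hzs k))
end

section
/- If (A₀, A₁, A₂) is an extendable collection of cap sets in 𝔽₃ⁿ, and S ⊆ {0,1,2}ᵐ is a recursively admissible set, then (S(A₀,A₁,A₂), A₁ᵐ, A₂ᵐ) is an extendable collection of cap sets in 𝔽₃^{nm}, where A₁ᵐ and A₂ᵐ denote the m-fold direct products. -/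
instance (a b c : Fin 3) : Decidable (TripleCond a b c) := by
  unfold TripleCond; infer_instance

lemma tc_zzc : ∀ a b c : Fin 3, a = 0 → b = 0 → c ≠ 0 → TripleCond a b c := by decide

lemma tc_zcz : ∀ a b c : Fin 3, a = 0 → c = 0 → b ≠ 0 → TripleCond a b c := by decide

lemma tc_czz : ∀ a b c : Fin 3, a ≠ 0 → b = 0 → c = 0 → TripleCond a b c := by decide

lemma tc_pair01 : ∀ a b : Fin 3, ({a, b} : Multiset (Fin 3)) = {0, 1} → TripleCond a b 2 := by
  decide

lemma tc_pair02 : ∀ a b : Fin 3, ({a, b} : Multiset (Fin 3)) = {0, 2} → TripleCond a b 1 := by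
  decide

lemma sum_ne_of_tripleCond {n : ℕ} {A : Fin 3 → Set (Fin n → ZMod 3)} (hext : IsExtendable A)
    {a b c : Fin 3} (h : TripleCond a b c) :
    ∀ x ∈ A a, ∀ y ∈ A b, ∀ z ∈ A c, x + y + z ≠ 0 := by
  have E01 : ∀ x ∈ A 0, ∀ y ∈ A 0, ∀ z ∈ A 1, x + y + z ≠ 0 :=
    fun x hx y hy z hz => hext.1 x hx y hy z (Or.inl hz)
  have E02 : ∀ x ∈ A 0, ∀ y ∈ A 0, ∀ z ∈ A 2, x + y + z ≠ 0 :=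
    fun x hx y hy z hz => hext.1 x hx y hy z (Or.inr hz)
  have E12 := hext.2
  intro x hx y hy z hz hs
  fin_cases a <;> fin_cases b <;> fin_cases c <;>
    first
      | exact absurd h (by decide)
      | exact E01 x hx y hy z hz (by linear_combination hs)
      | exact E01 x hx z hz y hy (by linear_combination hs)
      | exact E01 y hy z hz x hx (by linear_combination hs)
      | exact E02 x hx y hy z hz (by linear_combination hs)
      | exact E02 x hx z hz y hy (by linear_combination hs)
      | exact E02 y hy z hz x hx (by linear_combination hs)
      | exact E12 x hx y hy z hz (by linear_combination hs)
      | exact E12 x hx z hz y hy (by linear_combination hs)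
      | exact E12 y hy x hx z hz (by linear_combination hs)
      | exact E12 y hy z hz x hx (by linear_combination hs)
      | exact E12 z hz x hx y hy (by linear_combination hs)
      | exact E12 z hz y hy x hx (by linear_combination hs)

theorem extProd_recursively_extendable {n m : ℕ} (A : Fin 3 → Set (Fin n → ZMod 3))
    (hcap : ∀ i, IsCapSet (A i)) (hext : IsExtendable A)
    (S : Set (Fin m → Fin 3)) (hS : IsRecursivelyAdmissible S) :
    (∀ i, IsCapSet ((![extProd S A, powSet m (A 1), powSet m (A 2)]) i)) ∧
      IsExtendable ![extProd S A, powSet m (A 1), powSet m (A 2)] := by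
  obtain ⟨hAdm, hcard, hrec⟩ := hS
  have hzero : ∀ s ∈ S, ∃ k, s k = 0 := by
    intro s hs
    obtain ⟨t, htS, hts⟩ := Set.exists_ne_of_one_lt_ncard (s := S) (by omega) s
    obtain ⟨⟨i, hi0, _⟩, -⟩ := hAdm.1 s hs t htS (fun h => hts h.symm)
    exact ⟨i, hi0⟩
  have H := fun {a b c : Fin 3} (h : TripleCond a b c) => sum_ne_of_tripleCond hext h
  have badd : ∀ {x y z : Fin (m * n) → ZMod 3}, x + y + z = 0 → ∀ i : Fin m,
      (fun j : Fin n => x (finProdFinEquiv (i, j))) + (fun j : Fin n => y (finProdFinEquiv (i, j)))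
        + (fun j : Fin n => z (finProdFinEquiv (i, j))) = 0 := by
    intro x y z h i
    funext j
    exact congrFun h _
  have bext : ∀ {x y : Fin (m * n) → ZMod 3},
      (∀ i : Fin m, (fun j : Fin n => x (finProdFinEquiv (i, j)))
        = (fun j : Fin n => y (finProdFinEquiv (i, j)))) → x = y := by
    intro x y h
    funext k
    have h2 := congrFun (h (finProdFinEquiv.symm k).1) (finProdFinEquiv.symm k).2
    rwa [Prod.mk.eta, Equiv.apply_symm_apply] at h2
  constructor
  · intro i
    fin_cases i
    · show IsCapSet (extProd S A)
      intro x hx y hy z hz hsum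
      obtain ⟨s, hsS, hx⟩ := hx
      obtain ⟨s', hs'S, hy⟩ := hy
      obtain ⟨s'', hs''S, hz⟩ := hz
      have HF : ∀ k, TripleCond (s k) (s' k) (s'' k) → x = y ∧ y = z := fun k htc =>
        absurd (badd hsum k) (H htc _ (hx k) _ (hy k) _ (hz k))
      by_cases h1 : s = s'
      · by_cases h2 : s' = s''
        · subst h1; subst h2
          have hb := fun i => hcap (s i) _ (hx i) _ (hy i) _ (hz i) (badd hsum i)
          exact ⟨bext fun i => (hb i).1, bext fun i => (hb i).2⟩
        · obtain ⟨⟨i, hi0, hi1⟩, -⟩ := hAdm.1 s' hs'S s'' hs''S h2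
          exact HF i (tc_zzc _ _ _ (h1 ▸ hi0) hi0 hi1)
      · by_cases h2 : s = s''
        · obtain ⟨⟨i, hi0, hi1⟩, -⟩ := hAdm.1 s hsS s' hs'S h1
          exact HF i (tc_zcz _ _ _ hi0 (h2 ▸ hi0) hi1)
        · by_cases h3 : s' = s''
          · obtain ⟨⟨i, hi0, hi1⟩, -⟩ := hAdm.1 s' hs'S s hsS (fun h => h1 h.symm)
            exact HF i (tc_czz _ _ _ hi1 hi0 (h3 ▸ hi0))
          · obtain ⟨k, htc⟩ := hAdm.2 s hsS s' hs'S s'' hs''S h1 h2 h3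
            exact HF k htc
    · show IsCapSet (powSet m (A 1))
      intro x hx y hy z hz hsum
      have hb := fun i => hcap 1 _ (hx i) _ (hy i) _ (hz i) (badd hsum i)
      exact ⟨bext fun i => (hb i).1, bext fun i => (hb i).2⟩
    · show IsCapSet (powSet m (A 2))
      intro x hx y hy z hz hsum
      have hb := fun i => hcap 2 _ (hx i) _ (hy i) _ (hz i) (badd hsum i)
      exact ⟨bext fun i => (hb i).1, bext fun i => (hb i).2⟩
  · constructor
    · intro x hx y hy z hz hsum
      obtain ⟨s, hsS, hx⟩ := hx
      obtain ⟨s', hs'S, hy⟩ := hy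
      by_cases h1 : s = s'
      · subst h1
        obtain ⟨k, hk⟩ := hzero s hsS
        rcases hz with hz | hz
        · exact H (show TripleCond (s k) (s k) 1 by rw [hk]; decide)
            _ (hx k) _ (hy k) _ (hz k) (badd hsum k)
        · exact H (show TripleCond (s k) (s k) 2 by rw [hk]; decide)
            _ (hx k) _ (hy k) _ (hz k) (badd hsum k)
      · rcases hrec s hsS s' hs'S h1 with ⟨⟨i, hi⟩, ⟨j, hj⟩⟩ | ⟨k, hk, hk'⟩
        · rcases hz with hz | hz
          · exact H (tc_pair02 _ _ hj) _ (hx j) _ (hy j) _ (hz j) (badd hsum j)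
          · exact H (tc_pair01 _ _ hi) _ (hx i) _ (hy i) _ (hz i) (badd hsum i)
        · rcases hz with hz | hz
          · exact H (tc_zzc _ _ 1 hk hk' (by decide)) _ (hx k) _ (hy k) _ (hz k) (badd hsum k)
          · exact H (tc_zzc _ _ 2 hk hk' (by decide)) _ (hx k) _ (hy k) _ (hz k) (badd hsum k)
    · intro x hx y hy z hz hsum
      obtain ⟨s, hsS, hx⟩ := hx
      obtain ⟨k, hk⟩ := hzero s hsS
      exact H (show TripleCond (s k) 1 2 by rw [hk]; decide)
        _ (hx k) _ (hy k) _ (hz k) (badd hsum k)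
end

section
/- For any m ≥ 2, there exists a recursively admissible set S ⊆ {0,1,2}ᵐ with |S| = m in which every element has exactly m−1 nonzero coordinates. -/
private def fvec {m : ℕ} (a : Fin m) : Fin m → Fin 3 :=
  fun i => if i = a then 0 else if i < a then 1 else 2

private lemma fvec_self {m : ℕ} (a : Fin m) : fvec a a = 0 := by simp [fvec]

private lemma fvec_lt {m : ℕ} {a k : Fin m} (h : k < a) : fvec a k = 1 := by
  simp [fvec, h.ne, h]

private lemma fvec_gt {m : ℕ} {a k : Fin m} (h : a < k) : fvec a k = 2 := by
  simp [fvec, h.ne', not_lt_of_gt h]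

private lemma fvec_ne_zero {m : ℕ} {a k : Fin m} (h : k ≠ a) : fvec a k ≠ 0 := by
  rcases lt_or_gt_of_ne h with h' | h'
  · rw [fvec_lt h']; decide
  · rw [fvec_gt h']; decide

private lemma fvec_inj {m : ℕ} : Function.Injective (fvec (m := m)) := by
  intro a b hab
  by_contra h
  have hb : fvec a b = 0 := by rw [hab, fvec_self]
  exact fvec_ne_zero (Ne.symm h) hb

private instance inst_s8 (a b c : Fin 3) : Decidable (TripleCond a b c) := by
  unfold TripleCond; infer_instance

private lemma tc_swap1' : ∀ a b c : Fin 3, TripleCond a b c → TripleCond b a c := by decide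

private lemma tc_swap2' : ∀ a b c : Fin 3, TripleCond a b c → TripleCond a c b := by decide

private lemma tc_swap1 {a b c : Fin 3} (h : TripleCond a b c) : TripleCond b a c :=
  tc_swap1' a b c h

private lemma tc_swap2 {a b c : Fin 3} (h : TripleCond a b c) : TripleCond a c b :=
  tc_swap2' a b c h

private lemma tc_core {m : ℕ} {a b c : Fin m} (h1 : a < b) (h2 : b < c) :
    TripleCond (fvec a b) (fvec b b) (fvec c b) := by
  rw [fvec_gt h1, fvec_self, fvec_lt h2]; decide

private lemma tc_main {m : ℕ} {a b c : Fin m} (hab : a ≠ b) (hac : a ≠ c) (hbc : b ≠ c) :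
    ∃ k, TripleCond (fvec a k) (fvec b k) (fvec c k) := by
  rcases lt_or_gt_of_ne hab with h1 | h1 <;> rcases lt_or_gt_of_ne hac with h2 | h2 <;>
    rcases lt_or_gt_of_ne hbc with h3 | h3
  · exact ⟨b, tc_core h1 h3⟩
  · exact ⟨c, tc_swap2 (tc_core h2 h3)⟩
  · exact absurd ((h2.trans h1).trans h3) (lt_irrefl c)
  · exact ⟨a, tc_swap2 (tc_swap1 (tc_core h2 h1))⟩
  · exact ⟨a, tc_swap1 (tc_core h1 h2)⟩
  · exact absurd ((h3.trans h1).trans h2) (lt_irrefl c)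
  · exact ⟨c, tc_swap1 (tc_swap2 (tc_core h3 h2))⟩
  · exact ⟨b, tc_swap1 (tc_swap2 (tc_swap1 (tc_core h3 h1)))⟩

theorem exists_recursively_admissible_weight_sub_one (m : ℕ) (hm : 2 ≤ m) :
    ∃ S : Set (Fin m → Fin 3), IsRecursivelyAdmissible S ∧ S.ncard = m ∧
      ∀ s ∈ S, weight s = m - 1 := by
  classical
  refine ⟨Set.range fvec, ⟨⟨?_, ?_⟩, ?_, ?_⟩, ?_, ?_⟩
  · rintro s ⟨a, rfl⟩ s' ⟨b, rfl⟩ hne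
    have hab : a ≠ b := fun h => hne (by rw [h])
    exact ⟨⟨a, fvec_self a, fvec_ne_zero hab⟩,
      ⟨b, fvec_ne_zero hab.symm, fvec_self b⟩⟩
  · rintro s ⟨a, rfl⟩ s' ⟨b, rfl⟩ s'' ⟨c, rfl⟩ h1 h2 h3
    exact tc_main (fun h => h1 (by rw [h])) (fun h => h2 (by rw [h]))
      (fun h => h3 (by rw [h]))
  · have : (Set.range (fvec (m := m))).ncard = m := by
      rw [← Set.image_univ, Set.ncard_image_of_injective _ fvec_inj, Set.ncard_univ,
        Nat.card_eq_fintype_card, Fintype.card_fin]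
    omega
  · rintro s ⟨a, rfl⟩ s' ⟨b, rfl⟩ hne
    have hab : a ≠ b := fun h => hne (by rw [h])
    left
    rcases lt_or_gt_of_ne hab with h | h
    · exact ⟨⟨a, by rw [fvec_self, fvec_lt h]⟩, ⟨b, by rw [fvec_gt h, fvec_self]; decide⟩⟩
    · exact ⟨⟨b, by rw [fvec_lt h, fvec_self]; decide⟩, ⟨a, by rw [fvec_self, fvec_gt h]⟩⟩
  · rw [← Set.image_univ, Set.ncard_image_of_injective _ fvec_inj, Set.ncard_univ,
      Nat.card_eq_fintype_card, Fintype.card_fin]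
  · rintro s ⟨a, rfl⟩
    have : (Finset.univ.filter fun i => fvec a i ≠ 0) = Finset.univ.erase a := by
      ext i
      simp only [Finset.mem_filter, Finset.mem_erase, Finset.mem_univ, true_and, and_true]
      constructor
      · intro h hia; exact h (hia ▸ fvec_self a)
      · exact fvec_ne_zero
    rw [weight, this, Finset.card_erase_of_mem (Finset.mem_univ a), Finset.card_univ,
      Fintype.card_fin]
end

section
/- There is an extendable collection (A₀, A₁, A₂) of cap sets in 𝔽₃⁶ with |A₀| = 12 and |A₁| = |A₂| = 112. -/
set_option maxRecDepth 20000

def d3 (n : ℕ) : Fin 6 → ZMod 3 := fun i => ((n / 3 ^ (i : ℕ) % 3 : ℕ) : ZMod 3)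

def e3 (x : Fin 6 → ZMod 3) : ℕ :=
  (x 0).val + 3 * (x 1).val + 9 * (x 2).val + 27 * (x 3).val + 81 * (x 4).val + 243 * (x 5).val

def t3 (a b : ℕ) : ℕ :=
  (3 - (a / 1 % 3 % 3 + b / 1 % 3 % 3) % 3) % 3
    + 3 * ((3 - (a / 3 % 3 % 3 + b / 3 % 3 % 3) % 3) % 3)
    + 9 * ((3 - (a / 9 % 3 % 3 + b / 9 % 3 % 3) % 3) % 3)
    + 27 * ((3 - (a / 27 % 3 % 3 + b / 27 % 3 % 3) % 3) % 3)
    + 81 * ((3 - (a / 81 % 3 % 3 + b / 81 % 3 % 3) % 3) % 3)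
    + 243 * ((3 - (a / 243 % 3 % 3 + b / 243 % 3 % 3) % 3) % 3)

def capL0 : List ℕ := [9, 18, 112, 114, 219, 224, 256, 278, 301, 512, 521, 544]
def capL1 : List ℕ := [1, 2, 3, 6, 14, 16, 23, 25, 31, 40, 44, 53, 62, 67, 76, 80, 82, 90, 103, 105, 119, 124, 128, 129, 140, 148, 150, 161, 164, 174, 179, 180, 196, 202, 210, 215, 226, 231, 235, 239, 244, 246, 252, 261, 271, 273, 293, 295, 297, 306, 316, 318, 331, 341, 346, 350, 352, 357, 367, 370, 380, 385, 397, 404, 406, 411, 423, 430, 438, 441, 450, 458, 462, 466, 474, 484, 488, 492, 495, 504, 513, 524, 528, 531, 542, 546, 554, 556, 569, 570, 576, 581, 599, 600, 608, 615, 624, 630, 634, 639, 653, 661, 665, 670, 676, 680, 686, 688, 704, 705, 713, 725]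
def capL2 : List ℕ := [1, 2, 3, 6, 13, 26, 27, 45, 54, 63, 89, 95, 124, 129, 135, 154, 166, 187, 189, 200, 231, 239, 244, 246, 254, 258, 269, 274, 279, 283, 293, 295, 299, 303, 314, 316, 318, 327, 331, 334, 343, 348, 355, 359, 363, 367, 377, 380, 387, 392, 396, 401, 406, 416, 418, 425, 427, 437, 438, 448, 453, 457, 459, 467, 473, 474, 477, 488, 492, 499, 505, 507, 514, 516, 524, 528, 535, 548, 554, 556, 558, 566, 569, 577, 584, 586, 593, 594, 598, 603, 615, 619, 624, 628, 635, 636, 644, 653, 654, 659, 660, 668, 676, 684, 691, 693, 700, 706, 710, 715, 725, 726]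

def capM0 : ℕ := 57586103448358381760527204979855391873131186511179198867587474101618541665934064606149630902549742156465103159160371093445153916797989443371663751780312284009857536
def capM1 : ℕ := 176544215940702953286876085004819921909209365952821861021569824206315458826819086357030443653750389141180747871482059914964000395184998012660717889509263830176885826415598939352362708268770606284394730459147346657755214
def capM2 : ℕ := 529680709730458596688053719340400111557026921937468069014109465041504626241647930351073905012900409526794661451006234869352014954030303670194540686103706090243492615950096948376622783387862626294831171597090931334979662
def capM12 : ℕ := 529724053251897642887041244123905513030799229825368478691284930873911269558643371410504387109712395564966969109312678104284909695579878042440702983605577539222096525689344251738708762500946527441358768040037412902101070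

def capF0 : Finset (Fin 6 → ZMod 3) := (capL0.map d3).toFinset
def capF1 : Finset (Fin 6 → ZMod 3) := (capL1.map d3).toFinset
def capF2 : Finset (Fin 6 → ZMod 3) := (capL2.map d3).toFinset

lemma coordEq (u v : ℕ) :
    (-((u : ZMod 3) + (v : ZMod 3))).val = (3 - (u % 3 + v % 3) % 3) % 3 := by
  have key : ∀ w₁ w₂ : ZMod 3, (-(w₁ + w₂)).val = (3 - (w₁.val + w₂.val) % 3) % 3 := by decide
  rw [key, ZMod.val_natCast, ZMod.val_natCast]

lemma t3_eq (a b : ℕ) : e3 (-(d3 a + d3 b)) = t3 a b := by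
  show (-((↑(a / 1 % 3) : ZMod 3) + (↑(b / 1 % 3) : ZMod 3))).val
      + 3 * (-((↑(a / 3 % 3) : ZMod 3) + (↑(b / 3 % 3) : ZMod 3))).val
      + 9 * (-((↑(a / 9 % 3) : ZMod 3) + (↑(b / 9 % 3) : ZMod 3))).val
      + 27 * (-((↑(a / 27 % 3) : ZMod 3) + (↑(b / 27 % 3) : ZMod 3))).val
      + 81 * (-((↑(a / 81 % 3) : ZMod 3) + (↑(b / 81 % 3) : ZMod 3))).val
      + 243 * (-((↑(a / 243 % 3) : ZMod 3) + (↑(b / 243 % 3) : ZMod 3))).val = t3 a b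
  rw [coordEq, coordEq, coordEq, coordEq, coordEq, coordEq]
  rfl

lemma natMem0 : ∀ a ∈ capL0, Nat.testBit capM0 a = true := by decide
lemma natMem12_1 : ∀ a ∈ capL1, Nat.testBit capM12 a = true := by decide
lemma natMem12_2 : ∀ a ∈ capL2, Nat.testBit capM12 a = true := by decide
lemma natMem1 : ∀ a ∈ capL1, Nat.testBit capM1 a = true := by decide
lemma natMem2 : ∀ a ∈ capL2, Nat.testBit capM2 a = true := by decide

lemma natPair0 : ∀ a ∈ capL0, ∀ b ∈ capL0,
    Nat.testBit capM0 (t3 a b) = false ∨ a = b := by decide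
lemma natPair1 : ∀ a ∈ capL1, ∀ b ∈ capL1,
    Nat.testBit capM1 (t3 a b) = false ∨ a = b := by decide
lemma natPair2 : ∀ a ∈ capL2, ∀ b ∈ capL2,
    Nat.testBit capM2 (t3 a b) = false ∨ a = b := by decide

lemma natCond1 : ∀ a ∈ capL0, ∀ b ∈ capL0,
    Nat.testBit capM12 (t3 a b) = false := by decide
lemma natCond2 : ∀ a ∈ capL1, ∀ b ∈ capL2,
    Nat.testBit capM0 (t3 a b) = false := by decide

lemma he3_0 : ∀ a ∈ capL0, e3 (d3 a) = a := by decide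
lemma he3_1 : ∀ a ∈ capL1, e3 (d3 a) = a := by decide
lemma he3_2 : ∀ a ∈ capL2, e3 (d3 a) = a := by decide

lemma nodup0 : capL0.Nodup := by decide
lemma nodup1 : capL1.Nodup := by decide
lemma nodup2 : capL2.Nodup := by decide

lemma negDouble (x : Fin 6 → ZMod 3) : -(x + x) = x := by
  funext i
  have h : ∀ a : ZMod 3, -(a + a) = a := by decide
  exact h (x i)

lemma memF_iff {L : List ℕ} {z : Fin 6 → ZMod 3} (hz : z ∈ (L.map d3).toFinset) :
    ∃ a ∈ L, d3 a = z := by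
  rw [List.mem_toFinset, List.mem_map] at hz
  exact hz

lemma capCardAux (L : List ℕ) (he : ∀ a ∈ L, e3 (d3 a) = a) (hn : L.Nodup) :
    (L.map d3).toFinset.card = L.length := by
  have hinj : ∀ a ∈ L, ∀ b ∈ L, d3 a = d3 b → a = b := by
    intro a ha b hb h
    rw [← he a ha, ← he b hb, h]
  have hnd : (L.map d3).Nodup := List.Nodup.map_on hinj hn
  rw [List.card_toFinset, hnd.dedup, List.length_map]

lemma isCapSetAux (L : List ℕ) (m : ℕ)
    (he : ∀ a ∈ L, e3 (d3 a) = a)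
    (hmem : ∀ a ∈ L, Nat.testBit m a = true)
    (hpair : ∀ a ∈ L, ∀ b ∈ L, Nat.testBit m (t3 a b) = false ∨ a = b) :
    IsCapSet (↑(L.map d3).toFinset : Set (Fin 6 → ZMod 3)) := by
  intro x hx y hy z hz hsum
  obtain ⟨a, ha, rfl⟩ := memF_iff (Finset.mem_coe.mp hx)
  obtain ⟨b, hb, rfl⟩ := memF_iff (Finset.mem_coe.mp hy)
  obtain ⟨c, hc, rfl⟩ := memF_iff (Finset.mem_coe.mp hz)
  have hz' : d3 c = -(d3 a + d3 b) := by linear_combination hsum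
  have hc' : c = t3 a b := by rw [← he c hc, hz', t3_eq]
  rcases hpair a ha b hb with h | h
  · exfalso
    have ht := hmem c hc
    rw [hc', h] at ht
    exact Bool.noConfusion ht
  · subst h
    refine ⟨rfl, ?_⟩
    rw [hz', negDouble]


theorem exists_extendable_collection_dim6 :
    ∃ A : Fin 3 → Set (Fin 6 → ZMod 3),
      (∀ i, IsCapSet (A i)) ∧ IsExtendable A ∧
      (A 0).ncard = 12 ∧ (A 1).ncard = 112 ∧ (A 2).ncard = 112 := by
  refine ⟨![↑capF0, ↑capF1, ↑capF2], ?_, ⟨?_, ?_⟩, ?_, ?_, ?_⟩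
  · intro i
    fin_cases i
    · exact isCapSetAux capL0 capM0 he3_0 natMem0 natPair0
    · exact isCapSetAux capL1 capM1 he3_1 natMem1 natPair1
    · exact isCapSetAux capL2 capM2 he3_2 natMem2 natPair2
  · intro x hx y hy z hz heq
    obtain ⟨a, ha, rfl⟩ := memF_iff (Finset.mem_coe.mp hx)
    obtain ⟨b, hb, rfl⟩ := memF_iff (Finset.mem_coe.mp hy)
    have hzc : ∃ c, (c ∈ capL1 ∨ c ∈ capL2) ∧ d3 c = z := by
      rcases Set.mem_union _ _ _ |>.mp hz with h | h
      · obtain ⟨c, hc, rfl⟩ := memF_iff (Finset.mem_coe.mp h)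
        exact ⟨c, Or.inl hc, rfl⟩
      · obtain ⟨c, hc, rfl⟩ := memF_iff (Finset.mem_coe.mp h)
        exact ⟨c, Or.inr hc, rfl⟩
    obtain ⟨c, hc, rfl⟩ := hzc
    have hz' : d3 c = -(d3 a + d3 b) := by linear_combination heq
    have he3c : e3 (d3 c) = c := by
      rcases hc with h | h
      · exact he3_1 c h
      · exact he3_2 c h
    have hc' : c = t3 a b := by rw [← he3c, hz', t3_eq]
    have ht : Nat.testBit capM12 c = true := by
      rcases hc with h | h
      · exact natMem12_1 c h
      · exact natMem12_2 c h
    rw [hc', natCond1 a ha b hb] at ht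
    exact Bool.noConfusion ht
  · intro x hx y hy z hz heq
    obtain ⟨a, ha, rfl⟩ := memF_iff (Finset.mem_coe.mp hx)
    obtain ⟨b, hb, rfl⟩ := memF_iff (Finset.mem_coe.mp hy)
    obtain ⟨c, hc, rfl⟩ := memF_iff (Finset.mem_coe.mp hz)
    have hx' : d3 a = -(d3 b + d3 c) := by linear_combination heq
    have ha' : a = t3 b c := by rw [← he3_0 a ha, hx', t3_eq]
    have ht : Nat.testBit capM0 a = true := natMem0 a ha
    rw [ha', natCond2 b hb c hc] at ht
    exact Bool.noConfusion ht
  · show (↑capF0 : Set (Fin 6 → ZMod 3)).ncard = 12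
    rw [Set.ncard_coe_finset]
    exact capCardAux capL0 he3_0 nodup0
  · show (↑capF1 : Set (Fin 6 → ZMod 3)).ncard = 112
    rw [Set.ncard_coe_finset]
    exact capCardAux capL1 he3_1 nodup1
  · show (↑capF2 : Set (Fin 6 → ZMod 3)).ncard = 112
    rw [Set.ncard_coe_finset]
    exact capCardAux capL2 he3_2 nodup2
end

section
/- If S ⊆ {0,1,2}ⁿ and T ⊆ {0,1,2}ᵐ are admissible sets, then their direct product S × T = {(s,t) : s ∈ S, t ∈ T} ⊆ {0,1,2}^{n+m} is an admissible set. -/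
lemma tripleCond_0a0 (a : Fin 3) (ha : a ≠ 0) : TripleCond 0 a 0 := by
  fin_cases a
  · exact absurd rfl ha
  · right; left; decide
  · right; right; decide

lemma tripleCond_a00 (a : Fin 3) (ha : a ≠ 0) : TripleCond a 0 0 := by
  fin_cases a
  · exact absurd rfl ha
  · right; left; decide
  · right; right; decide

lemma tripleCond_00a (a : Fin 3) (ha : a ≠ 0) : TripleCond 0 0 a := by
  fin_cases a
  · exact absurd rfl ha
  · right; left; decide
  · right; right; decide

theorem appendSet_isAdmissible {n m : ℕ} (S : Set (Fin n → Fin 3)) (T : Set (Fin m → Fin 3))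
    (hS : IsAdmissible S) (hT : IsAdmissible T) :
    IsAdmissible (appendSet S T) := by
  obtain ⟨hS1, hS2⟩ := hS
  obtain ⟨hT1, hT2⟩ := hT
  constructor
  · rintro x ⟨s, hs, t, ht, rfl⟩ y ⟨s', hs', t', ht', rfl⟩ hne
    by_cases hss : s = s'
    · subst hss
      have htt : t ≠ t' := by rintro rfl; exact hne rfl
      obtain ⟨⟨i, hi1, hi2⟩, ⟨j, hj1, hj2⟩⟩ := hT1 t ht t' ht' htt
      exact ⟨⟨Fin.natAdd n i, by simpa, by simpa⟩, ⟨Fin.natAdd n j, by simpa, by simpa⟩⟩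
    · obtain ⟨⟨i, hi1, hi2⟩, ⟨j, hj1, hj2⟩⟩ := hS1 s hs s' hs' hss
      exact ⟨⟨Fin.castAdd m i, by simpa, by simpa⟩, ⟨Fin.castAdd m j, by simpa, by simpa⟩⟩
  · rintro x ⟨s, hs, t, ht, rfl⟩ y ⟨s', hs', t', ht', rfl⟩ z ⟨s'', hs'', t'', ht'', rfl⟩ hxy hxz hyz
    by_cases ht12 : t = t'
    · -- t = t', so s ≠ s'
      subst ht12
      have hs12 : s ≠ s' := by rintro rfl; exact hxy rfl
      by_cases ht13 : t = t''
      · subst ht13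
        have hs13 : s ≠ s'' := by rintro rfl; exact hxz rfl
        have hs23 : s' ≠ s'' := by rintro rfl; exact hyz rfl
        obtain ⟨k, hk⟩ := hS2 s hs s' hs' s'' hs'' hs12 hs13 hs23
        exact ⟨Fin.castAdd m k, by simpa⟩
      · -- t = t' ≠ t'': pick j with t j = 0 ∧ t'' j ≠ 0, triple (0,0,b)
        obtain ⟨⟨j, hj1, hj2⟩, -⟩ := hT1 t ht t'' ht'' ht13
        refine ⟨Fin.natAdd n j, ?_⟩
        simp only [Fin.append_right, hj1]
        exact tripleCond_00a _ hj2
    · by_cases ht13 : t = t''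
      · -- t = t'' ≠ t': pick j with t j = 0 ∧ t' j ≠ 0, triple (0,b,0)
        obtain ⟨⟨j, hj1, hj2⟩, -⟩ := hT1 t ht t' ht' ht12
        refine ⟨Fin.natAdd n j, ?_⟩
        simp only [Fin.append_right, hj1, ← ht13]
        exact tripleCond_0a0 _ hj2
      · by_cases ht23 : t' = t''
        · -- t' = t'' ≠ t: pick j with t j ≠ 0 ∧ t' j = 0, triple (a,0,0)
          obtain ⟨-, ⟨j, hj1, hj2⟩⟩ := hT1 t ht t' ht' ht12
          refine ⟨Fin.natAdd n j, ?_⟩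
          simp only [Fin.append_right, hj2, ← ht23]
          exact tripleCond_a00 _ hj1
        · obtain ⟨k, hk⟩ := hT2 t ht t' ht' t'' ht'' ht12 ht13 ht23
          exact ⟨Fin.natAdd n k, by simpa⟩
end

section
/- If S₀, S₁, S₂ ⊆ {0,1,2}ᵐ is a meta-extendable collection of admissible sets, and T ⊆ {0,1,2}ʳ is admissible, then T(S₀, S₁, S₂) = ⋃_{t ∈ T} (S_{t₁} × ⋯ × S_{t_r}) ⊆ {0,1,2}^{mr} is an admissible set. -/
instance : ∀ a b c : Fin 3, Decidable (TripleCond a b c) := fun a b c => by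
  unfold TripleCond; infer_instance

lemma tc_perm : ∀ a b c : Fin 3, TripleCond a b c →
    TripleCond b a c ∧ TripleCond a c b ∧ TripleCond c a b ∧
    TripleCond b c a ∧ TripleCond c b a := by decide

lemma tc_zero : ∀ c : Fin 3, c ≠ 0 →
    TripleCond 0 0 c ∧ TripleCond 0 c 0 ∧ TripleCond c 0 0 := by decide

lemma tc_cases : ∀ a b c : Fin 3, TripleCond a b c →
    (a = 0 ∧ b = 0 ∧ c ≠ 0) ∨ (a = 0 ∧ c = 0 ∧ b ≠ 0) ∨ (b = 0 ∧ c = 0 ∧ a ≠ 0) ∨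
    (a = 0 ∧ b = 1 ∧ c = 2) ∨ (a = 0 ∧ b = 2 ∧ c = 1) ∨ (a = 1 ∧ b = 0 ∧ c = 2) ∨
    (a = 1 ∧ b = 2 ∧ c = 0) ∨ (a = 2 ∧ b = 0 ∧ c = 1) ∨ (a = 2 ∧ b = 1 ∧ c = 0) := by decide

lemma fin3_ne : ∀ c : Fin 3, c ≠ 0 → c = 1 ∨ c = 2 := by decide

lemma mem_union_of_ne {m : ℕ} {S : Fin 3 → Set (Fin m → Fin 3)} {c : Fin 3} (hc : c ≠ 0)
    {v : Fin m → Fin 3} (hv : v ∈ S c) : v ∈ S 1 ∪ S 2 := by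
  rcases fin3_ne c hc with rfl | rfl
  · exact Or.inl hv
  · exact Or.inr hv

lemma weight_lt {m : ℕ} {a b : Fin m → Fin 3} (h : weight a < weight b) :
    ∃ k, a k = 0 ∧ b k ≠ 0 := by
  by_contra hc
  push_neg at hc
  have : weight b ≤ weight a := by
    apply Finset.card_le_card
    intro k hk
    simp only [Finset.mem_filter, Finset.mem_univ, true_and] at hk ⊢
    intro ha
    exact hk (hc k ha)
  omega

lemma blocks_ext {m r : ℕ} {x x' : Fin (r * m) → Fin 3}
    (h : ∀ i : Fin r, (fun j : Fin m => x (finProdFinEquiv (i, j))) =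
      (fun j : Fin m => x' (finProdFinEquiv (i, j)))) : x = x' := by
  funext k
  have := congrFun (h (finProdFinEquiv.symm k).1) (finProdFinEquiv.symm k).2
  simpa only [Prod.mk.eta, Equiv.apply_symm_apply] using this

lemma key_lemma {m : ℕ} {S : Fin 3 → Set (Fin m → Fin 3)} (hmeta : IsMetaExtendable S)
    {a b c : Fin 3} (h : TripleCond a b c) {u v w : Fin m → Fin 3}
    (hu : u ∈ S a) (hv : v ∈ S b) (hw : w ∈ S c) :
    ∃ k, TripleCond (u k) (v k) (w k) := by
  obtain ⟨h1, h2, h3⟩ := hmeta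
  rcases tc_cases a b c h with ⟨rfl, rfl, hc⟩ | ⟨rfl, rfl, hb⟩ | ⟨rfl, rfl, ha⟩
    | ⟨rfl, rfl, rfl⟩ | ⟨rfl, rfl, rfl⟩ | ⟨rfl, rfl, rfl⟩
    | ⟨rfl, rfl, rfl⟩ | ⟨rfl, rfl, rfl⟩ | ⟨rfl, rfl, rfl⟩
  · exact h2 u hu v hv w (mem_union_of_ne hc hw)
  · obtain ⟨k, hk⟩ := h2 u hu w hw v (mem_union_of_ne hb hv)
    exact ⟨k, (tc_perm _ _ _ hk).2.1⟩
  · obtain ⟨k, hk⟩ := h2 v hv w hw u (mem_union_of_ne ha hu)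
    exact ⟨k, (tc_perm _ _ _ hk).2.2.1⟩
  · exact h3 u hu v hv w hw
  · obtain ⟨k, hk⟩ := h3 u hu w hw v hv
    exact ⟨k, (tc_perm _ _ _ hk).2.1⟩
  · obtain ⟨k, hk⟩ := h3 v hv u hu w hw
    exact ⟨k, (tc_perm _ _ _ hk).1⟩
  · obtain ⟨k, hk⟩ := h3 w hw u hu v hv
    exact ⟨k, (tc_perm _ _ _ hk).2.2.2.1⟩
  · obtain ⟨k, hk⟩ := h3 v hv w hw u hu
    exact ⟨k, (tc_perm _ _ _ hk).2.2.1⟩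
  · obtain ⟨k, hk⟩ := h3 w hw v hv u hu
    exact ⟨k, (tc_perm _ _ _ hk).2.2.2.2⟩

theorem metaProd_isAdmissible {m r : ℕ} (S : Fin 3 → Set (Fin m → Fin 3))
    (hadm : ∀ i, IsAdmissible (S i)) (hmeta : IsMetaExtendable S)
    (T : Set (Fin r → Fin 3)) (hT : IsAdmissible T) :
    IsAdmissible (metaProd T S) := by
  constructor
  · rintro x ⟨t, ht, hx⟩ x' ⟨t', ht', hx'⟩ hne
    by_cases htt : t = t'
    · subst htt
      have hblk : ∃ i : Fin r, (fun j : Fin m => x (finProdFinEquiv (i, j))) ≠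
          (fun j : Fin m => x' (finProdFinEquiv (i, j))) := by
        by_contra hcon
        push_neg at hcon
        exact hne (blocks_ext hcon)
      obtain ⟨i, hi⟩ := hblk
      obtain ⟨⟨k1, hk1⟩, ⟨k2, hk2⟩⟩ := (hadm (t i)).1 _ (hx i) _ (hx' i) hi
      exact ⟨⟨finProdFinEquiv (i, k1), hk1.1, hk1.2⟩,
        ⟨finProdFinEquiv (i, k2), hk2.1, hk2.2⟩⟩
    · obtain ⟨⟨i, hi0, hi1⟩, ⟨j, hj1, hj0⟩⟩ := hT.1 t ht t' ht' htt
      constructor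
      · have hxb := hx i
        rw [hi0] at hxb
        have hx'b : (fun j : Fin m => x' (finProdFinEquiv (i, j))) ∈ S 1 ∪ S 2 :=
          mem_union_of_ne hi1 (hx' i)
        obtain ⟨k, hk0, hk1⟩ := weight_lt (hmeta.1 _ hxb _ hx'b)
        exact ⟨finProdFinEquiv (i, k), hk0, hk1⟩
      · have hx'b := hx' j
        rw [hj0] at hx'b
        have hxb : (fun j' : Fin m => x (finProdFinEquiv (j, j'))) ∈ S 1 ∪ S 2 :=
          mem_union_of_ne hj1 (hx j)
        obtain ⟨k, hk0, hk1⟩ := weight_lt (hmeta.1 _ hx'b _ hxb)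
        exact ⟨finProdFinEquiv (j, k), hk1, hk0⟩
  · rintro x ⟨t, ht, hx⟩ x' ⟨t', ht', hx'⟩ x'' ⟨t'', ht'', hx''⟩ h12 h13 h23
    by_cases h1 : t = t'
    · by_cases h2 : t = t''
      · subst h1; subst h2
        have hblk : ∃ i : Fin r, (fun j : Fin m => x (finProdFinEquiv (i, j))) ≠
            (fun j : Fin m => x' (finProdFinEquiv (i, j))) := by
          by_contra hcon
          push_neg at hcon
          exact h12 (blocks_ext hcon)
        obtain ⟨i, hab⟩ := hblk
        by_cases hca : (fun j : Fin m => x'' (finProdFinEquiv (i, j))) =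
            (fun j : Fin m => x (finProdFinEquiv (i, j)))
        · obtain ⟨⟨k, hk⟩, _⟩ := (hadm (t i)).1 _ (hx i) _ (hx' i) hab
          refine ⟨finProdFinEquiv (i, k), ?_⟩
          have h3 : x'' (finProdFinEquiv (i, k)) = 0 := by
            have := congrFun hca k
            rw [this, hk.1]
          show TripleCond (x (finProdFinEquiv (i, k))) (x' (finProdFinEquiv (i, k)))
            (x'' (finProdFinEquiv (i, k)))
          rw [hk.1, h3]
          exact (tc_zero _ hk.2).2.1
        · by_cases hcb : (fun j : Fin m => x'' (finProdFinEquiv (i, j))) =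
              (fun j : Fin m => x' (finProdFinEquiv (i, j)))
          · obtain ⟨_, ⟨k, hk⟩⟩ := (hadm (t i)).1 _ (hx i) _ (hx' i) hab
            refine ⟨finProdFinEquiv (i, k), ?_⟩
            have h3 : x'' (finProdFinEquiv (i, k)) = 0 := by
              have := congrFun hcb k
              rw [this, hk.2]
            show TripleCond (x (finProdFinEquiv (i, k))) (x' (finProdFinEquiv (i, k)))
              (x'' (finProdFinEquiv (i, k)))
            rw [hk.2, h3]
            exact (tc_zero _ hk.1).2.2
          · obtain ⟨k, hk⟩ := (hadm (t i)).2 _ (hx i) _ (hx' i) _ (hx'' i) hab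
              (fun h => hca h.symm) (fun h => hcb h.symm)
            exact ⟨finProdFinEquiv (i, k), hk⟩
      · obtain ⟨⟨i, hi0, hi1⟩, _⟩ := hT.1 t ht t'' ht'' h2
        have htc : TripleCond (t i) (t' i) (t'' i) := by
          rw [← h1, hi0]
          exact (tc_zero _ hi1).1
        obtain ⟨k, hk⟩ := key_lemma hmeta htc (hx i) (hx' i) (hx'' i)
        exact ⟨finProdFinEquiv (i, k), hk⟩
    · by_cases h2 : t' = t''
      · obtain ⟨⟨i, hi0, hi1⟩, _⟩ := hT.1 t' ht' t ht (fun h => h1 h.symm)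
        have htc : TripleCond (t i) (t' i) (t'' i) := by
          rw [← h2, hi0]
          exact (tc_zero _ hi1).2.2
        obtain ⟨k, hk⟩ := key_lemma hmeta htc (hx i) (hx' i) (hx'' i)
        exact ⟨finProdFinEquiv (i, k), hk⟩
      · by_cases h3 : t = t''
        · obtain ⟨⟨i, hi0, hi1⟩, _⟩ := hT.1 t ht t' ht' h1
          have htc : TripleCond (t i) (t' i) (t'' i) := by
            rw [← h3, hi0]
            exact (tc_zero _ hi1).2.1
          obtain ⟨k, hk⟩ := key_lemma hmeta htc (hx i) (hx' i) (hx'' i)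
          exact ⟨finProdFinEquiv (i, k), hk⟩
        · obtain ⟨k, hk⟩ := hT.2 t ht t' ht' t'' ht'' h1 h3 h2
          obtain ⟨k', hk'⟩ := key_lemma hmeta hk (hx k) (hx' k) (hx'' k)
          exact ⟨finProdFinEquiv (k, k'), hk'⟩
end

section
/- For every m ≥ 3 there exists an admissible set S ⊆ {0,1,2}ᵐ with |S| = C(m,2) in which every element has exactly 2 nonzero coordinates, and for every m ≥ 4 there exists an admissible set T ⊆ {0,1,2}ᵐ with |T| = C(m,3) in which every element has exactly 3 nonzero coordinates. -/
namespace AdmHelper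
open Finset

variable {m : ℕ}

/-- The vector attached to a finite set: value 2 at the second-smallest element,
value 1 at the other elements, 0 elsewhere. -/
def vec (t : Finset (Fin m)) : Fin m → Fin 3 :=
  fun k => if k ∈ t then (if (t.filter (· < k)).card = 1 then 2 else 1) else 0

lemma vec_ne_zero_iff (t : Finset (Fin m)) (k : Fin m) : vec t k ≠ 0 ↔ k ∈ t := by
  unfold vec
  by_cases h : k ∈ t
  · simp only [h, if_true, iff_true]
    split <;> decide
  · simp [h]

lemma vec_eq_zero (t : Finset (Fin m)) (k : Fin m) (h : k ∉ t) : vec t k = 0 := by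
  simp [vec, h]

lemma weight_vec (t : Finset (Fin m)) : weight (vec t) = t.card := by
  unfold weight
  congr 1
  ext k
  simp [vec_ne_zero_iff]

lemma vec_injective : Function.Injective (vec (m := m)) := by
  intro t t' h
  ext k
  rw [← vec_ne_zero_iff, ← vec_ne_zero_iff, h]

lemma vec_pair (s : Finset (Fin m)) (u a : Fin m) (hu : u ≠ a)
    (hs : ∀ t, t ∈ s ↔ t = u ∨ t = a) :
    vec s u = if a < u then 2 else 1 := by
  have hm : u ∈ s := (hs u).mpr (Or.inl rfl)
  have hseq : s = {u, a} := Finset.ext fun t => by rw [hs]; simp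
  have hcard : (s.filter (· < u)).card = if a < u then 1 else 0 := by
    rw [hseq, Finset.card_filter, Finset.sum_insert (by simp [hu]), Finset.sum_singleton]
    simp [lt_irrefl]
  unfold vec
  rw [if_pos hm, hcard]
  by_cases h : a < u <;> simp [h]

lemma vec_tri (s : Finset (Fin m)) (u a b : Fin m) (hua : u ≠ a) (hub : u ≠ b) (hab : a ≠ b)
    (hs : ∀ t, t ∈ s ↔ t = u ∨ t = a ∨ t = b) :
    vec s u = if ((a < u) ↔ (b < u)) then 1 else 2 := by
  have hm : u ∈ s := (hs u).mpr (Or.inl rfl)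
  have hseq : s = {u, a, b} := Finset.ext fun t => by rw [hs]; simp
  have hcard : (s.filter (· < u)).card =
      (if a < u then 1 else 0) + (if b < u then 1 else 0) := by
    rw [hseq, Finset.card_filter, Finset.sum_insert (by simp [hua, hub]),
        Finset.sum_insert (by simp [hab]), Finset.sum_singleton]
    simp [lt_irrefl]
  unfold vec
  rw [if_pos hm, hcard]
  by_cases h1 : a < u <;> by_cases h2 : b < u <;> simp [h1, h2]

lemma exists_mem_sdiff {s t : Finset (Fin m)} (hc : t.card ≤ s.card) (h : s ≠ t) :
    ∃ a ∈ s, a ∉ t := by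
  by_contra hcon
  push_neg at hcon
  exact h (Finset.eq_of_subset_of_card_le hcon hc)

lemma third {A : Finset (Fin m)} {x y : Fin m} (hA : A.card = 3) (hx : x ∈ A) (hy : y ∈ A)
    (hxy : x ≠ y) : ∃ z ∈ A, z ≠ x ∧ z ≠ y ∧ A = {x, y, z} := by
  have hsub : ({x, y} : Finset (Fin m)) ⊆ A := by
    intro t ht
    simp at ht
    rcases ht with h | h <;> subst h <;> assumption
  have hcard2 : ({x, y} : Finset (Fin m)).card = 2 := by
    rw [Finset.card_insert_of_notMem (by simp [hxy]), Finset.card_singleton]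
  obtain ⟨z, hz, hz2⟩ : ∃ z ∈ A, z ∉ ({x, y} : Finset (Fin m)) := by
    by_contra hcon
    push_neg at hcon
    have := Finset.eq_of_subset_of_card_le hcon (by omega)
    rw [this] at hA
    omega
  simp at hz2
  refine ⟨z, hz, hz2.1, hz2.2, ?_⟩
  have hsub3 : ({x, y, z} : Finset (Fin m)) ⊆ A := by
    intro t ht
    simp at ht
    rcases ht with h | h | h <;> subst h <;> assumption
  have hcard3 : ({x, y, z} : Finset (Fin m)).card = 3 := by
    rw [Finset.card_insert_of_notMem (by simp [hxy, Ne.symm hz2.1]),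
        Finset.card_insert_of_notMem (by simp [Ne.symm hz2.2]), Finset.card_singleton]
  exact (Finset.eq_of_subset_of_card_le hsub3 (by omega)).symm

lemma pair_eq {A : Finset (Fin m)} {x y : Fin m} (hA : A.card = 2) (hx : x ∈ A) (hy : y ∈ A)
    (hxy : x ≠ y) : A = {x, y} := by
  have hsub : ({x, y} : Finset (Fin m)) ⊆ A := by
    intro t ht
    simp at ht
    rcases ht with h | h <;> subst h <;> assumption
  have hcard2 : ({x, y} : Finset (Fin m)).card = 2 := by
    rw [Finset.card_insert_of_notMem (by simp [hxy]), Finset.card_singleton]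
  exact (Finset.eq_of_subset_of_card_le hsub (by omega)).symm

lemma triple_eq {A : Finset (Fin m)} {x y z : Fin m} (hA : A.card = 3) (hx : x ∈ A)
    (hy : y ∈ A) (hz : z ∈ A) (hxy : x ≠ y) (hxz : x ≠ z) (hyz : y ≠ z) :
    A = {x, y, z} := by
  have hsub : ({x, y, z} : Finset (Fin m)) ⊆ A := by
    intro t ht
    simp at ht
    rcases ht with h | h | h <;> subst h <;> assumption
  have hcard3 : ({x, y, z} : Finset (Fin m)).card = 3 := by
    rw [Finset.card_insert_of_notMem (by simp [hxy, hxz]),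
        Finset.card_insert_of_notMem (by simp [hyz]), Finset.card_singleton]
  exact (Finset.eq_of_subset_of_card_le hsub (by omega)).symm

lemma cond1 (t t' : Finset (Fin m)) (hc : t.card = t'.card) (hne : t ≠ t') :
    (∃ i, vec t i = 0 ∧ vec t' i ≠ 0) ∧ ∃ j, vec t j ≠ 0 ∧ vec t' j = 0 := by
  obtain ⟨i, hi, hi2⟩ := exists_mem_sdiff (le_of_eq hc) (Ne.symm hne)
  obtain ⟨j, hj, hj2⟩ := exists_mem_sdiff (le_of_eq hc.symm) hne
  exact ⟨⟨i, vec_eq_zero t i hi2, (vec_ne_zero_iff t' i).mpr hi⟩,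
    ⟨j, (vec_ne_zero_iff t j).mpr hj, vec_eq_zero t' j hj2⟩⟩

instance : ∀ a b c : Fin 3, Decidable (TripleCond a b c) := fun a b c => by
  unfold TripleCond; infer_instance

lemma tcz : ∀ a : Fin 3, a ≠ 0 →
    TripleCond a 0 0 ∧ TripleCond 0 a 0 ∧ TripleCond 0 0 a := by decide

lemma single_case {A B C : Finset (Fin m)} {k : Fin m}
    (hk : (k ∈ A ∧ k ∉ B ∧ k ∉ C) ∨ (k ∉ A ∧ k ∈ B ∧ k ∉ C) ∨ (k ∉ A ∧ k ∉ B ∧ k ∈ C)) :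
    TripleCond (vec A k) (vec B k) (vec C k) := by
  rcases hk with ⟨h1, h2, h3⟩ | ⟨h1, h2, h3⟩ | ⟨h1, h2, h3⟩
  · rw [vec_eq_zero B k h2, vec_eq_zero C k h3]
    exact (tcz _ ((vec_ne_zero_iff A k).mpr h1)).1
  · rw [vec_eq_zero A k h1, vec_eq_zero C k h3]
    exact (tcz _ ((vec_ne_zero_iff B k).mpr h2)).2.1
  · rw [vec_eq_zero A k h1, vec_eq_zero B k h2]
    exact (tcz _ ((vec_ne_zero_iff C k).mpr h3)).2.2

lemma chase2 {A B C : Finset (Fin m)} (hA : A.card = 2) (hB : B.card = 2) (hC : C.card = 2)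
    (hAB : A ≠ B) (hAC : A ≠ C)
    (h : ∀ k, (k ∈ A → k ∈ B ∨ k ∈ C) ∧ (k ∈ B → k ∈ A ∨ k ∈ C) ∧ (k ∈ C → k ∈ A ∨ k ∈ B)) :
    ∃ x y p : Fin m, x ≠ y ∧ x ≠ p ∧ y ≠ p ∧
      A = {x, y} ∧ B = {y, p} ∧ C = {x, p} ∧ x ∉ B ∧ y ∉ C ∧ p ∉ A := by
  obtain ⟨x, hxA, hxB⟩ := exists_mem_sdiff (by omega) hAB
  have hxC : x ∈ C := ((h x).1 hxA).resolve_left hxB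
  obtain ⟨p, hpB, hpA⟩ := exists_mem_sdiff (by omega) (Ne.symm hAB)
  have hpC : p ∈ C := ((h p).2.1 hpB).resolve_left hpA
  have hxp : x ≠ p := fun he => hxB (he ▸ hpB)
  obtain ⟨y, hyA, hyC⟩ := exists_mem_sdiff (by omega) hAC
  have hyB : y ∈ B := ((h y).1 hyA).resolve_right hyC
  have hxy : x ≠ y := fun he => hyC (he ▸ hxC)
  have hyp : y ≠ p := fun he => hpA (he ▸ hyA)
  exact ⟨x, y, p, hxy, hxp, hyp, pair_eq hA hxA hyA hxy, pair_eq hB hyB hpB hyp,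
    pair_eq hC hxC hpC hxp, hxB, hyC, hpA⟩

lemma chase3 {A B C : Finset (Fin m)} (hA : A.card = 3) (hB : B.card = 3) (hC : C.card = 3)
    (hAB : A ≠ B) (hAC : A ≠ C)
    (h : ∀ k, (k ∈ A → k ∈ B ∨ k ∈ C) ∧ (k ∈ B → k ∈ A ∨ k ∈ C) ∧ (k ∈ C → k ∈ A ∨ k ∈ B)) :
    ∃ w x y p : Fin m, x ≠ y ∧ x ≠ p ∧ y ≠ p ∧ w ≠ x ∧ w ≠ y ∧ w ≠ p ∧
      A = {x, y, w} ∧ B = {y, p, w} ∧ C = {x, p, w} ∧ x ∉ B ∧ y ∉ C ∧ p ∉ A := by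
  obtain ⟨x, hxA, hxB⟩ := exists_mem_sdiff (by omega) hAB
  have hxC : x ∈ C := ((h x).1 hxA).resolve_left hxB
  obtain ⟨p, hpB, hpA⟩ := exists_mem_sdiff (by omega) (Ne.symm hAB)
  have hpC : p ∈ C := ((h p).2.1 hpB).resolve_left hpA
  have hxp : x ≠ p := fun he => hxB (he ▸ hpB)
  obtain ⟨y, hyA, hyC⟩ := exists_mem_sdiff (by omega) hAC
  have hyB : y ∈ B := ((h y).1 hyA).resolve_right hyC
  have hxy : x ≠ y := fun he => hyC (he ▸ hxC)
  have hyp : y ≠ p := fun he => hpA (he ▸ hyA)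
  obtain ⟨w, hwA, hwx, hwy, hAeq⟩ := third hA hxA hyA hxy
  have hwp : w ≠ p := fun he => hpA (he ▸ hwA)
  have hwBC : w ∈ B ∧ w ∈ C := by
    rcases (h w).1 hwA with hwB | hwC
    · refine ⟨hwB, ?_⟩
      by_contra hwC
      have hBeq : B = {y, p, w} := triple_eq hB hyB hpB hwB hyp (Ne.symm hwy) (Ne.symm hwp)
      obtain ⟨c3, hc3C, hc3x, hc3p, _⟩ := third hC hxC hpC hxp
      rcases (h c3).2.2 hc3C with hcm | hcm
      · rw [hAeq] at hcm
        simp only [Finset.mem_insert, Finset.mem_singleton] at hcm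
        rcases hcm with rfl | rfl | rfl
        exacts [hc3x rfl, hyC hc3C, hwC hc3C]
      · rw [hBeq] at hcm
        simp only [Finset.mem_insert, Finset.mem_singleton] at hcm
        rcases hcm with rfl | rfl | rfl
        exacts [hyC hc3C, hc3p rfl, hwC hc3C]
    · refine ⟨?_, hwC⟩
      by_contra hwB
      have hCeq : C = {x, p, w} := triple_eq hC hxC hpC hwC hxp (Ne.symm hwx) (Ne.symm hwp)
      obtain ⟨b3, hb3B, hb3y, hb3p, _⟩ := third hB hyB hpB hyp
      rcases (h b3).2.1 hb3B with hbm | hbm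
      · rw [hAeq] at hbm
        simp only [Finset.mem_insert, Finset.mem_singleton] at hbm
        rcases hbm with rfl | rfl | rfl
        exacts [hxB hb3B, hb3y rfl, hwB hb3B]
      · rw [hCeq] at hbm
        simp only [Finset.mem_insert, Finset.mem_singleton] at hbm
        rcases hbm with rfl | rfl | rfl
        exacts [hxB hb3B, hb3p rfl, hwB hb3B]
  exact ⟨w, x, y, p, hxy, hxp, hyp, hwx, hwy, hwp, hAeq,
    triple_eq hB hyB hpB hwBC.1 hyp (Ne.symm hwy) (Ne.symm hwp),
    triple_eq hC hxC hpC hwBC.2 hxp (Ne.symm hwx) (Ne.symm hwp), hxB, hyC, hpA⟩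

lemma cond2_two {A B C : Finset (Fin m)} (hA : A.card = 2) (hB : B.card = 2) (hC : C.card = 2)
    (hAB : A ≠ B) (hAC : A ≠ C) (hBC : B ≠ C) :
    ∃ k, TripleCond (vec A k) (vec B k) (vec C k) := by
  by_cases hone : ∃ k, (k ∈ A ∧ k ∉ B ∧ k ∉ C) ∨ (k ∉ A ∧ k ∈ B ∧ k ∉ C) ∨
      (k ∉ A ∧ k ∉ B ∧ k ∈ C)
  · obtain ⟨k, hk⟩ := hone
    exact ⟨k, single_case hk⟩
  · have h : ∀ k, (k ∈ A → k ∈ B ∨ k ∈ C) ∧ (k ∈ B → k ∈ A ∨ k ∈ C) ∧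
        (k ∈ C → k ∈ A ∨ k ∈ B) := by
      intro k
      push_neg at hone
      have := hone k
      tauto
    obtain ⟨x, y, p, hxy, hxp, hyp, hAeq, hBeq, hCeq, hxB, hyC, hpA⟩ :=
      chase2 hA hB hC hAB hAC h
    have hmA : ∀ t, t ∈ A ↔ t = y ∨ t = x := fun t => by
      simp only [hAeq, Finset.mem_insert, Finset.mem_singleton]; tauto
    have hmA' : ∀ t, t ∈ A ↔ t = x ∨ t = y := fun t => by
      simp only [hAeq, Finset.mem_insert, Finset.mem_singleton]
    have hmB : ∀ t, t ∈ B ↔ t = y ∨ t = p := fun t => by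
      simp only [hBeq, Finset.mem_insert, Finset.mem_singleton]
    have hmB' : ∀ t, t ∈ B ↔ t = p ∨ t = y := fun t => by
      simp only [hBeq, Finset.mem_insert, Finset.mem_singleton]; tauto
    have hmC : ∀ t, t ∈ C ↔ t = x ∨ t = p := fun t => by
      simp only [hCeq, Finset.mem_insert, Finset.mem_singleton]
    have hmC' : ∀ t, t ∈ C ↔ t = p ∨ t = x := fun t => by
      simp only [hCeq, Finset.mem_insert, Finset.mem_singleton]; tauto
    rcases hxy.lt_or_gt with h1 | h1
    · rcases hyp.lt_or_gt with h2 | h2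
      · refine ⟨y, ?_⟩
        rw [vec_pair A y x (Ne.symm hxy) hmA, vec_pair B y p hyp hmB,
            vec_eq_zero C y hyC, if_pos h1, if_neg (asymm h2)]
        decide
      · rcases hxp.lt_or_gt with h3 | h3
        · refine ⟨p, ?_⟩
          rw [vec_eq_zero A p hpA, vec_pair B p y (Ne.symm hyp) hmB',
              vec_pair C p x (Ne.symm hxp) hmC', if_neg (asymm h2), if_pos h3]
          decide
        · refine ⟨x, ?_⟩
          rw [vec_pair A x y hxy hmA', vec_eq_zero B x hxB,
              vec_pair C x p hxp hmC, if_neg (asymm h1), if_pos h3]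
          decide
    · rcases hxp.lt_or_gt with h2 | h2
      · refine ⟨x, ?_⟩
        rw [vec_pair A x y hxy hmA', vec_eq_zero B x hxB,
            vec_pair C x p hxp hmC, if_pos h1, if_neg (asymm h2)]
        decide
      · rcases hyp.lt_or_gt with h3 | h3
        · refine ⟨p, ?_⟩
          rw [vec_eq_zero A p hpA, vec_pair B p y (Ne.symm hyp) hmB',
              vec_pair C p x (Ne.symm hxp) hmC', if_pos h3, if_neg (asymm h2)]
          decide
        · refine ⟨y, ?_⟩
          rw [vec_pair A y x (Ne.symm hxy) hmA, vec_pair B y p hyp hmB,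
              vec_eq_zero C y hyC, if_neg (asymm h1), if_pos h3]
          decide

lemma cond2_three {A B C : Finset (Fin m)} (hA : A.card = 3) (hB : B.card = 3) (hC : C.card = 3)
    (hAB : A ≠ B) (hAC : A ≠ C) (hBC : B ≠ C) :
    ∃ k, TripleCond (vec A k) (vec B k) (vec C k) := by
  by_cases hone : ∃ k, (k ∈ A ∧ k ∉ B ∧ k ∉ C) ∨ (k ∉ A ∧ k ∈ B ∧ k ∉ C) ∨
      (k ∉ A ∧ k ∉ B ∧ k ∈ C)
  · obtain ⟨k, hk⟩ := hone
    exact ⟨k, single_case hk⟩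
  · have h : ∀ k, (k ∈ A → k ∈ B ∨ k ∈ C) ∧ (k ∈ B → k ∈ A ∨ k ∈ C) ∧
        (k ∈ C → k ∈ A ∨ k ∈ B) := by
      intro k
      push_neg at hone
      have := hone k
      tauto
    obtain ⟨w, x, y, p, hxy, hxp, hyp, hwx, hwy, hwp, hAeq, hBeq, hCeq, hxB, hyC, hpA⟩ :=
      chase3 hA hB hC hAB hAC h
    have hmA : ∀ t, t ∈ A ↔ t = y ∨ t = x ∨ t = w := fun t => by
      simp only [hAeq, Finset.mem_insert, Finset.mem_singleton]; tauto
    have hmA' : ∀ t, t ∈ A ↔ t = x ∨ t = y ∨ t = w := fun t => by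
      simp only [hAeq, Finset.mem_insert, Finset.mem_singleton]
    have hmB : ∀ t, t ∈ B ↔ t = y ∨ t = p ∨ t = w := fun t => by
      simp only [hBeq, Finset.mem_insert, Finset.mem_singleton]
    have hmB' : ∀ t, t ∈ B ↔ t = p ∨ t = y ∨ t = w := fun t => by
      simp only [hBeq, Finset.mem_insert, Finset.mem_singleton]; tauto
    have hmC : ∀ t, t ∈ C ↔ t = x ∨ t = p ∨ t = w := fun t => by
      simp only [hCeq, Finset.mem_insert, Finset.mem_singleton]
    have hmC' : ∀ t, t ∈ C ↔ t = p ∨ t = x ∨ t = w := fun t => by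
      simp only [hCeq, Finset.mem_insert, Finset.mem_singleton]; tauto
    rcases hxy.lt_or_gt with h1 | h1
    · rcases hyp.lt_or_gt with h2 | h2
      · -- x < y < p, mid y ∈ A (partner x), B (partner p)
        refine ⟨y, ?_⟩
        have hh : ¬ p < y := asymm h2
        rw [vec_tri A y x w (Ne.symm hxy) (Ne.symm hwy) (Ne.symm hwx) hmA,
            vec_tri B y p w hyp (Ne.symm hwy) (Ne.symm hwp) hmB,
            vec_eq_zero C y hyC]
        by_cases hw : w < y
        · rw [if_pos (by tauto), if_neg (by tauto)]; decide
        · rw [if_neg (by tauto), if_pos (by tauto)]; decide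
      · rcases hxp.lt_or_gt with h3 | h3
        · -- x < p < y, mid p ∈ B (partner y), C (partner x)
          refine ⟨p, ?_⟩
          have hh : ¬ y < p := asymm h2
          rw [vec_eq_zero A p hpA,
              vec_tri B p y w (Ne.symm hyp) (Ne.symm hwp) (Ne.symm hwy) hmB',
              vec_tri C p x w (Ne.symm hxp) (Ne.symm hwp) (Ne.symm hwx) hmC']
          by_cases hw : w < p
          · rw [if_neg (by tauto), if_pos (by tauto)]; decide
          · rw [if_pos (by tauto), if_neg (by tauto)]; decide
        · -- p < x < y, mid x ∈ A (partner y), C (partner p)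
          refine ⟨x, ?_⟩
          have hh : ¬ y < x := asymm h1
          rw [vec_tri A x y w hxy (Ne.symm hwx) (Ne.symm hwy) hmA',
              vec_eq_zero B x hxB,
              vec_tri C x p w hxp (Ne.symm hwx) (Ne.symm hwp) hmC]
          by_cases hw : w < x
          · rw [if_neg (by tauto), if_pos (by tauto)]; decide
          · rw [if_pos (by tauto), if_neg (by tauto)]; decide
    · rcases hxp.lt_or_gt with h2 | h2
      · -- y < x < p, mid x ∈ A (partner y), C (partner p)
        refine ⟨x, ?_⟩
        have hh : ¬ p < x := asymm h2
        rw [vec_tri A x y w hxy (Ne.symm hwx) (Ne.symm hwy) hmA',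
            vec_eq_zero B x hxB,
            vec_tri C x p w hxp (Ne.symm hwx) (Ne.symm hwp) hmC]
        by_cases hw : w < x
        · rw [if_pos (by tauto), if_neg (by tauto)]; decide
        · rw [if_neg (by tauto), if_pos (by tauto)]; decide
      · rcases hyp.lt_or_gt with h3 | h3
        · -- y < p < x, mid p ∈ B (partner y), C (partner x)
          refine ⟨p, ?_⟩
          have hh : ¬ x < p := asymm h2
          rw [vec_eq_zero A p hpA,
              vec_tri B p y w (Ne.symm hyp) (Ne.symm hwp) (Ne.symm hwy) hmB',
              vec_tri C p x w (Ne.symm hxp) (Ne.symm hwp) (Ne.symm hwx) hmC']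
          by_cases hw : w < p
          · rw [if_pos (by tauto), if_neg (by tauto)]; decide
          · rw [if_neg (by tauto), if_pos (by tauto)]; decide
        · -- p < y < x, mid y ∈ A (partner x), B (partner p)
          refine ⟨y, ?_⟩
          have hh : ¬ x < y := asymm h1
          rw [vec_tri A y x w (Ne.symm hxy) (Ne.symm hwy) (Ne.symm hwx) hmA,
              vec_tri B y p w hyp (Ne.symm hwy) (Ne.symm hwp) hmB,
              vec_eq_zero C y hyC]
          by_cases hw : w < y
          · rw [if_neg (by tauto), if_pos (by tauto)]; decide
          · rw [if_pos (by tauto), if_neg (by tauto)]; decide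

lemma main (c : ℕ) (hc : c = 2 ∨ c = 3) (m : ℕ) :
    ∃ S : Set (Fin m → Fin 3), IsAdmissible S ∧ S.ncard = m.choose c ∧
      ∀ s ∈ S, weight s = c := by
  classical
  refine ⟨↑((Finset.univ.powersetCard c).image (vec (m := m))), ⟨?_, ?_⟩, ?_, ?_⟩
  · rintro s hs s' hs' hne
    rw [Finset.mem_coe, Finset.mem_image] at hs hs'
    obtain ⟨t, ht, rfl⟩ := hs
    obtain ⟨t', ht', rfl⟩ := hs'
    rw [Finset.mem_powersetCard_univ] at ht ht'
    have hne' : t ≠ t' := fun he => hne (he ▸ rfl)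
    exact cond1 t t' (ht.trans ht'.symm) hne'
  · rintro s hs s' hs' s'' hs'' h1 h2 h3
    rw [Finset.mem_coe, Finset.mem_image] at hs hs' hs''
    obtain ⟨t1, ht1, rfl⟩ := hs
    obtain ⟨t2, ht2, rfl⟩ := hs'
    obtain ⟨t3, ht3, rfl⟩ := hs''
    rw [Finset.mem_powersetCard_univ] at ht1 ht2 ht3
    have n12 : t1 ≠ t2 := fun he => h1 (he ▸ rfl)
    have n13 : t1 ≠ t3 := fun he => h2 (he ▸ rfl)
    have n23 : t2 ≠ t3 := fun he => h3 (he ▸ rfl)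
    rcases hc with rfl | rfl
    · exact cond2_two ht1 ht2 ht3 n12 n13 n23
    · exact cond2_three ht1 ht2 ht3 n12 n13 n23
  · rw [Set.ncard_coe_finset, Finset.card_image_of_injective _ vec_injective,
        Finset.card_powersetCard, Finset.card_univ, Fintype.card_fin]
  · rintro s hs
    rw [Finset.mem_coe, Finset.mem_image] at hs
    obtain ⟨t, ht, rfl⟩ := hs
    rw [Finset.mem_powersetCard_univ] at ht
    rw [weight_vec, ht]

end AdmHelper

theorem exists_admissible_weight_two_and_three :
    (∀ m : ℕ, 3 ≤ m → ∃ S : Set (Fin m → Fin 3), IsAdmissible S ∧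
      S.ncard = Nat.choose m 2 ∧ ∀ s ∈ S, weight s = 2) ∧
    (∀ m : ℕ, 4 ≤ m → ∃ T : Set (Fin m → Fin 3), IsAdmissible T ∧
      T.ncard = Nat.choose m 3 ∧ ∀ t ∈ T, weight t = 3) := by
  exact ⟨fun m _ => AdmHelper.main 2 (Or.inl rfl) m, fun m _ => AdmHelper.main 3 (Or.inr rfl) m⟩
end
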